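/- arXiv:2307.05718 — 3 statements merged into one kernel-verified Lean document; each statement's English description precedes it below -/
import Mathlib

section
/- A bipartite connected conjugate skew gain graph is balanced if and only if it is argument-wise distance compatible. -/
open Complex SimpleGraph Finset

/-- The conjugate skew gain of a walk: the product of the skew gains of its
oriented edges in order. -/
def walkGain {V : Type*} (φ : V → V → ℂ) {G : SimpleGraph V} :
    {u v : V} → G.Walk u v → ℂ
  | _, _, .nil => 1
  | u, _, .cons (v := w) _ p => φ u w * walkGain φ p

/-- A shortest oriented path from `u` to `v`. -/
def IsShortest {V : Type*} (G : SimpleGraph V) {u v : V} (p : G.Walk u v) : Prop :=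
  p.IsPath ∧ p.length = G.dist u v

/-- A conjugate skew gain graph is balanced if the skew gain of every oriented
cycle `C` satisfies `φ(C) = |φ(C)|`. -/
def CSGBalanced {V : Type*} (G : SimpleGraph V) (φ : V → V → ℂ) : Prop :=
  ∀ (u : V) (c : G.Walk u u), c.IsCycle →
    walkGain φ c = ((‖walkGain φ c‖ : ℝ) : ℂ)
/-- pairs -/
def DistCompatPair {V : Type*} (G : SimpleGraph V) (φ : V → V → ℂ) (u v : V) : Prop :=
  ∀ p q : G.Walk u v, IsShortest G p → IsShortest G q → walkGain φ p = walkGain φ q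

def ModCompatPair {V : Type*} (G : SimpleGraph V) (φ : V → V → ℂ) (u v : V) : Prop :=
  ∀ p q : G.Walk u v, IsShortest G p → IsShortest G q →
    ‖walkGain φ p‖ = ‖walkGain φ q‖

def ArgCompatPair {V : Type*} (G : SimpleGraph V) (φ : V → V → ℂ) (u v : V) : Prop :=
  ∀ p q : G.Walk u v, IsShortest G p → IsShortest G q →
    ∃ r : ℝ, 0 < r ∧ walkGain φ p / walkGain φ q = (r : ℂ)

noncomputable def Dmat {V : Type*} [Fintype V] [DecidableEq V] (G : SimpleGraph V)
    (g : V → V → ℂ) : Matrix V V ℂ :=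
  fun u v => if u = v then 0 else (G.dist u v : ℂ) * g u v

section AuxCSG

variable {V : Type*} {G : SimpleGraph V} {φ : V → V → ℂ}

@[simp] lemma walkGain_nil {u : V} : walkGain φ (SimpleGraph.Walk.nil : G.Walk u u) = 1 := rfl

@[simp] lemma walkGain_cons {u w v : V} (h : G.Adj u w) (p : G.Walk w v) :
    walkGain φ (SimpleGraph.Walk.cons h p) = φ u w * walkGain φ p := rfl

lemma walkGain_append {u v w : V} (p : G.Walk u v) (q : G.Walk v w) :
    walkGain φ (p.append q) = walkGain φ p * walkGain φ q := by
  induction p with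
  | nil => simp
  | cons h p ih => simp [ih, mul_assoc]

lemma walkGain_reverse (hsym : ∀ u v, G.Adj u v → φ v u = (starRingEnd ℂ) (φ u v))
    {u v : V} (p : G.Walk u v) :
    walkGain φ p.reverse = (starRingEnd ℂ) (walkGain φ p) := by
  induction p with
  | nil => simp
  | cons h p ih =>
    rw [SimpleGraph.Walk.reverse_cons, walkGain_append, ih, walkGain_cons, walkGain_cons,
      walkGain_nil, hsym _ _ h, map_mul]
    ring

lemma walkGain_ne_zero (hne : ∀ u v, G.Adj u v → φ u v ≠ 0) :
    ∀ {u v : V} (p : G.Walk u v), walkGain φ p ≠ 0 := by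
  intro u v p
  induction p with
  | nil => simp
  | cons h p ih => exact mul_ne_zero (hne _ _ h) ih

lemma coloring_parity (C : G.Coloring (Fin 2)) {u v : V} (p : G.Walk u v) :
    (C u = C v) ↔ Even p.length := by
  induction p with
  | nil => simp
  | cons h p ih =>
    have hne := C.valid h
    rw [SimpleGraph.Walk.length_cons, Nat.even_add_one, ← ih]
    have key : ∀ a b c : Fin 2, a ≠ b → (a = c ↔ ¬ (b = c)) := by decide
    exact key _ _ _ hne

lemma dist_parity (C : G.Coloring (Fin 2)) (hconn : G.Connected) (u v : V) :
    (C u = C v) ↔ Even (G.dist u v) := by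
  obtain ⟨p, hp⟩ := hconn.exists_walk_length_eq_dist u v
  rw [← hp]
  exact coloring_parity C p

lemma adj_dist_succ (C : G.Coloring (Fin 2)) (hconn : G.Connected) {u v : V}
    (h : G.Adj u v) (r : V) :
    G.dist r v = G.dist r u + 1 ∨ G.dist r u = G.dist r v + 1 := by
  have h1 : G.dist r v ≤ G.dist r u + 1 := by
    calc G.dist r v ≤ G.dist r u + G.dist u v := hconn.dist_triangle
    _ ≤ G.dist r u + 1 := by
        have := G.dist_le (SimpleGraph.Walk.cons h SimpleGraph.Walk.nil)
        simpa using this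
  have h2 : G.dist r u ≤ G.dist r v + 1 := by
    calc G.dist r u ≤ G.dist r v + G.dist v u := hconn.dist_triangle
    _ ≤ G.dist r v + 1 := by
        have := G.dist_le (SimpleGraph.Walk.cons h.symm SimpleGraph.Walk.nil)
        simpa using this
  have hneq : G.dist r u ≠ G.dist r v := by
    intro heq
    have pu := dist_parity C hconn r u
    have pv := dist_parity C hconn r v
    rw [heq] at pu
    have : C r = C u ↔ C r = C v := pu.trans pv.symm
    have hcne := C.valid h
    have key : ∀ a b c : Fin 2, b ≠ c → (a = b ↔ a = c) → False := by decide
    exact key _ _ _ hcne this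
  omega

/-- Balanced implies: for any two paths between the same pair of vertices,
`g(p) * conj (g(q))` is a positive real. -/
lemma pos_of_balanced (hne : ∀ u v, G.Adj u v → φ u v ≠ 0)
    (hsym : ∀ u v, G.Adj u v → φ v u = (starRingEnd ℂ) (φ u v))
    (hb : CSGBalanced G φ) :
    ∀ (n : ℕ) {u v : V} (p q : G.Walk u v), p.IsPath → q.IsPath →
      p.length + q.length ≤ n →
      ∃ r : ℝ, 0 < r ∧ walkGain φ p * (starRingEnd ℂ) (walkGain φ q) = (r : ℂ) := by
  classical
  intro n
  induction n with
  | zero =>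
    intro u v p q hp hq hlen
    have hl : p.length = 0 := by omega
    have huv : u = v := SimpleGraph.Walk.eq_of_length_eq_zero hl
    subst huv
    rw [SimpleGraph.Walk.isPath_iff_eq_nil.mp hp, SimpleGraph.Walk.isPath_iff_eq_nil.mp hq]
    exact ⟨1, one_pos, by simp⟩
  | succ n ih =>
    intro u v p q hp hq hlen
    by_cases hpq : p = q
    · subst hpq
      refine ⟨Complex.normSq (walkGain φ p), Complex.normSq_pos.mpr (walkGain_ne_zero hne p), ?_⟩
      exact Complex.mul_conj _
    by_cases huv : u = v
    · subst huv
      rw [SimpleGraph.Walk.isPath_iff_eq_nil.mp hp, SimpleGraph.Walk.isPath_iff_eq_nil.mp hq] at hpq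
      exact absurd rfl hpq
    by_cases hshare : ∃ x, x ∈ p.support ∧ x ∈ q.support ∧ x ≠ u ∧ x ≠ v
    · obtain ⟨x, hxp, hxq, hxu, hxv⟩ := hshare
      set p1 := p.takeUntil x hxp with hp1
      set p2 := p.dropUntil x hxp with hp2
      set q1 := q.takeUntil x hxq with hq1
      set q2 := q.dropUntil x hxq with hq2
      have hps : p1.append p2 = p := p.take_spec hxp
      have hqs : q1.append q2 = q := q.take_spec hxq
      have hplen : p1.length + p2.length = p.length := by
        rw [← hps, SimpleGraph.Walk.length_append]
      have hqlen : q1.length + q2.length = q.length := by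
        rw [← hqs, SimpleGraph.Walk.length_append]
      have hp2pos : p2.length ≠ 0 := fun h0 =>
        hxv (SimpleGraph.Walk.eq_of_length_eq_zero h0)
      have hq2pos : q2.length ≠ 0 := fun h0 =>
        hxv (SimpleGraph.Walk.eq_of_length_eq_zero h0)
      have hp1pos : p1.length ≠ 0 := fun h0 =>
        hxu (SimpleGraph.Walk.eq_of_length_eq_zero h0).symm
      have hq1pos : q1.length ≠ 0 := fun h0 =>
        hxu (SimpleGraph.Walk.eq_of_length_eq_zero h0).symm
      obtain ⟨r1, hr1, he1⟩ := ih p1 q1 (hp.takeUntil hxp) (hq.takeUntil hxq) (by omega)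
      obtain ⟨r2, hr2, he2⟩ := ih p2 q2 (hp.dropUntil hxp) (hq.dropUntil hxq) (by omega)
      refine ⟨r1 * r2, mul_pos hr1 hr2, ?_⟩
      rw [← hps, ← hqs, walkGain_append, walkGain_append, map_mul]
      push_cast
      linear_combination (walkGain φ p2 * (starRingEnd ℂ) (walkGain φ q2)) * he1 +
        (r1 : ℂ) * he2
    · push_neg at hshare
      -- p and q share only the endpoints; build a cycle
      cases p with
      | nil => exact absurd rfl huv
      | @cons _ w _ h p' =>
        have hp' : p'.IsPath := hp.of_cons
        have hup' : u ∉ p'.support := by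
          have := hp.support_nodup
          rw [SimpleGraph.Walk.support_cons] at this
          exact (List.nodup_cons.mp this).1
        have hqrev : q.reverse.IsPath := hq.reverse
        -- the appended walk is a path
        have hprpath : (p'.append q.reverse).IsPath := by
          apply SimpleGraph.Walk.IsPath.mk'
          rw [SimpleGraph.Walk.support_append, List.nodup_append]
          refine ⟨hp'.support_nodup, hqrev.support_nodup.tail, ?_⟩
          intro x hx1 y hx2 hxy; subst hxy
          have hxq : x ∈ q.support := by
            have : x ∈ q.reverse.support := by
              rw [SimpleGraph.Walk.support_eq_cons q.reverse]
              exact List.mem_cons_of_mem _ hx2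
            rwa [SimpleGraph.Walk.support_reverse, List.mem_reverse] at this
          have hxv : x ≠ v := by
            intro hxv; subst hxv
            have hnd := hqrev.support_nodup
            rw [SimpleGraph.Walk.support_eq_cons q.reverse] at hnd
            exact (List.nodup_cons.mp hnd).1 hx2
          have hxp : x ∈ (SimpleGraph.Walk.cons h p').support := by
            rw [SimpleGraph.Walk.support_cons]
            exact List.mem_cons_of_mem _ hx1
          have hxu : x ≠ u := fun hxu => hup' (hxu ▸ hx1)
          exact hxv (hshare x hxp hxq hxu)
        -- the first edge is not reused
        have hedge : s(u, w) ∉ (p'.append q.reverse).edges := by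
          rw [SimpleGraph.Walk.edges_append, List.mem_append]
          rintro (hin | hin)
          · exact hup' (SimpleGraph.Walk.fst_mem_support_of_mem_edges p' hin)
          · rw [SimpleGraph.Walk.edges_reverse, List.mem_reverse] at hin
            have hwq : w ∈ q.support := SimpleGraph.Walk.snd_mem_support_of_mem_edges q hin
            have hwp : w ∈ (SimpleGraph.Walk.cons h p').support := by
              rw [SimpleGraph.Walk.support_cons]
              exact List.mem_cons_of_mem _ p'.start_mem_support
            have hwv : w = v := hshare w hwp hwq h.ne'
            subst hwv
            -- then p' is nil, p is a single edge; show q equals it too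
            have hp'nil : p' = SimpleGraph.Walk.nil :=
              SimpleGraph.Walk.isPath_iff_eq_nil.mp hp'
            cases q with
            | nil => exact absurd rfl huv
            | @cons _ y _ h2 q2 =>
              rw [SimpleGraph.Walk.edges_cons, List.mem_cons] at hin
              rcases hin with heq | hin
              · have hyv : y = w := by
                  rcases Sym2.eq_iff.mp heq with ⟨-, hv⟩ | ⟨hy, -⟩
                  · exact hv.symm
                  · exact absurd hy h2.ne
                subst hyv
                have hq2nil : q2 = SimpleGraph.Walk.nil :=
                  SimpleGraph.Walk.isPath_iff_eq_nil.mp hq.of_cons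
                subst hp'nil; subst hq2nil
                exact hpq rfl
              · have : u ∈ q2.support :=
                  SimpleGraph.Walk.fst_mem_support_of_mem_edges q2 hin
                have hnd := hq.support_nodup
                rw [SimpleGraph.Walk.support_cons] at hnd
                exact (List.nodup_cons.mp hnd).1 this
        have hcyc : (SimpleGraph.Walk.cons h (p'.append q.reverse)).IsCycle :=
          (SimpleGraph.Walk.cons_isCycle_iff _ h).mpr ⟨hprpath, hedge⟩
        set c := SimpleGraph.Walk.cons h (p'.append q.reverse) with hc
        have hgc : walkGain φ c = walkGain φ (SimpleGraph.Walk.cons h p') *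
            (starRingEnd ℂ) (walkGain φ q) := by
          rw [hc, walkGain_cons, walkGain_append, walkGain_reverse hsym, walkGain_cons, mul_assoc]
        have hcne : walkGain φ c ≠ 0 := walkGain_ne_zero hne c
        refine ⟨‖walkGain φ c‖, by simpa using hcne, ?_⟩
        rw [← hgc]
        exact hb u c hcyc

lemma exists_shortest (hconn : G.Connected) (u v : V) :
    ∃ p : G.Walk u v, IsShortest G p := by
  obtain ⟨p, hp⟩ := hconn.exists_walk_length_eq_dist u v
  exact ⟨p, p.isPath_of_length_eq_dist hp, hp⟩

end AuxCSG

/-- A bipartite connected conjugate skew gain graph is balanced if and only if it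
is argument-wise distance compatible. -/
theorem bipartite_balanced_iff_argwise_distance_compatible {V : Type*}
    (G : SimpleGraph V) (φ : V → V → ℂ)
    (hbip : G.Colorable 2) (hconn : G.Connected)
    (hne : ∀ u v, G.Adj u v → φ u v ≠ 0)
    (hsym : ∀ u v, G.Adj u v → φ v u = (starRingEnd ℂ) (φ u v)) :
    CSGBalanced G φ ↔ ∀ u v : V, ArgCompatPair G φ u v := by
  classical
  constructor
  · -- balanced → arg compatible
    intro hb u v p q hp hq
    obtain ⟨r, hr, he⟩ := pos_of_balanced hne hsym hb (p.length + q.length) p q hp.1 hq.1 le_rfl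
    have hq0 : walkGain φ q ≠ 0 := walkGain_ne_zero hne q
    refine ⟨r / Complex.normSq (walkGain φ q),
      div_pos hr (Complex.normSq_pos.mpr hq0), ?_⟩
    push_cast
    rw [div_eq_div_iff hq0 (Complex.ofReal_ne_zero.mpr (Complex.normSq_pos.mpr hq0).ne')]
    rw [show ((Complex.normSq (walkGain φ q) : ℝ) : ℂ) =
      walkGain φ q * (starRingEnd ℂ) (walkGain φ q) from (Complex.mul_conj _).symm]
    linear_combination walkGain φ q * he
  · -- arg compatible → balanced
    intro hac
    obtain ⟨C⟩ := hbip
    have hV : Nonempty V := hconn.nonempty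
    obtain ⟨r⟩ := hV
    choose P hP using fun v => exists_shortest (G := G) hconn r v
    set ζ : V → ℂ := fun v => walkGain φ (P v) with hζ
    have hζne : ∀ v, ζ v ≠ 0 := fun v => walkGain_ne_zero hne (P v)
    have hedge : ∀ u v, G.Adj u v →
        ∃ t : ℝ, 0 < t ∧ φ u v = (t : ℂ) * (ζ u)⁻¹ * ((starRingEnd ℂ) (ζ v))⁻¹ := by
      have key : ∀ u v, G.Adj u v → G.dist r v = G.dist r u + 1 →
          ∃ s : ℝ, 0 < s ∧ ζ u * φ u v = (s : ℂ) * ζ v := by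
        intro u v h hd
        set p' := (P u).concat h with hp'
        have hlen : p'.length = G.dist r v := by
          rw [hp', SimpleGraph.Walk.length_concat, (hP u).2, hd]
        have hshort : IsShortest G p' := ⟨p'.isPath_of_length_eq_dist hlen, hlen⟩
        obtain ⟨s, hs, he⟩ := hac r v p' (P v) hshort (hP v)
        refine ⟨s, hs, ?_⟩
        have hgain : walkGain φ p' = ζ u * φ u v := by
          rw [hp', SimpleGraph.Walk.concat_eq_append, walkGain_append, walkGain_cons, walkGain_nil,
            mul_one]
        rw [hgain] at he
        rw [div_eq_iff (hζne v)] at he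
        rw [he]
      intro u v h
      rcases adj_dist_succ C hconn h r with hd | hd
      · obtain ⟨s, hs, he⟩ := key u v h hd
        refine ⟨s * Complex.normSq (ζ v),
          mul_pos hs (Complex.normSq_pos.mpr (hζne v)), ?_⟩
        have hcv : ((starRingEnd ℂ) (ζ v)) ≠ 0 := by
          simpa using hζne v
        rw [mul_assoc, ← mul_inv, eq_mul_inv_iff_mul_eq₀ (mul_ne_zero (hζne u) hcv)]
        push_cast
        rw [show ((Complex.normSq (ζ v) : ℝ) : ℂ) = ζ v * (starRingEnd ℂ) (ζ v) from
          (Complex.mul_conj _).symm]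
        linear_combination ((starRingEnd ℂ) (ζ v)) * he
      · obtain ⟨s, hs, he⟩ := key v u h.symm hd
        refine ⟨s * Complex.normSq (ζ u),
          mul_pos hs (Complex.normSq_pos.mpr (hζne u)), ?_⟩
        have he' : (starRingEnd ℂ) (ζ v) * φ u v = (s : ℂ) * (starRingEnd ℂ) (ζ u) := by
          have := congrArg (starRingEnd ℂ) he
          rw [map_mul, map_mul, ← hsym _ _ h.symm] at this
          simpa using this
        have hcv : ((starRingEnd ℂ) (ζ v)) ≠ 0 := by simpa using hζne v
        have hcu : ((starRingEnd ℂ) (ζ u)) ≠ 0 := by simpa using hζne u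
        rw [mul_assoc, ← mul_inv, eq_mul_inv_iff_mul_eq₀ (mul_ne_zero (hζne u) hcv)]
        push_cast
        rw [show ((Complex.normSq (ζ u) : ℝ) : ℂ) = ζ u * (starRingEnd ℂ) (ζ u) from
          (Complex.mul_conj _).symm]
        linear_combination (ζ u) * he'
    have hwalk : ∀ {u v : V} (w : G.Walk u v), ∃ t : ℝ, 0 < t ∧
        walkGain φ w = (t : ℂ) * (ζ u)⁻¹ * ((starRingEnd ℂ) (ζ v))⁻¹ := by
      intro u v w
      induction w with
      | @nil a =>
        refine ⟨Complex.normSq (ζ a), Complex.normSq_pos.mpr (hζne a), ?_⟩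
        have hcu : ((starRingEnd ℂ) (ζ a)) ≠ 0 := by simpa using hζne a
        rw [walkGain_nil, mul_assoc, ← mul_inv,
          eq_mul_inv_iff_mul_eq₀ (mul_ne_zero (hζne a) hcu), one_mul]
        exact Complex.mul_conj _
      | @cons a b c hadj p ih =>
        obtain ⟨t1, ht1, he1⟩ := hedge _ _ hadj
        obtain ⟨t2, ht2, he2⟩ := ih
        refine ⟨t1 * t2 / Complex.normSq (ζ b),
          div_pos (mul_pos ht1 ht2) (Complex.normSq_pos.mpr (hζne b)), ?_⟩
        have hcb : ((starRingEnd ℂ) (ζ b)) ≠ 0 := by simpa using hζne b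
        have hca : ((starRingEnd ℂ) (ζ c)) ≠ 0 := by simpa using hζne c
        have hnsb : (Complex.normSq (ζ b) : ℂ) ≠ 0 :=
          Complex.ofReal_ne_zero.mpr (Complex.normSq_pos.mpr (hζne b)).ne'
        rw [walkGain_cons, he1, he2]
        push_cast
        rw [show ((Complex.normSq (ζ b) : ℝ) : ℂ) = ζ b * (starRingEnd ℂ) (ζ b) from
          (Complex.mul_conj _).symm]
        field_simp
    intro u c hcyc
    obtain ⟨t, ht, he⟩ := hwalk c
    have hpos : walkGain φ c = ((t / Complex.normSq (ζ u) : ℝ) : ℂ) := by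
      have hcu : ((starRingEnd ℂ) (ζ u)) ≠ 0 := by simpa using hζne u
      rw [he]
      push_cast
      rw [show ((Complex.normSq (ζ u) : ℝ) : ℂ) = ζ u * (starRingEnd ℂ) (ζ u) from
        (Complex.mul_conj _).symm]
      field_simp
    rw [hpos, Complex.norm_real, Real.norm_eq_abs,
      abs_of_pos (div_pos ht (Complex.normSq_pos.mpr (hζne u)))]
end

section
/- A connected conjugate skew gain graph is distance compatible if and only if every block (maximal 2-connected subgraph) of it is distance compatible. -/
open Complex SimpleGraph Finset

/-- Distance compatibility of the conjugate skew gain graph induced on a vertex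
set `S`. -/
def DistCompatOn {V : Type*} (G : SimpleGraph V) (φ : V → V → ℂ) (S : Set V) : Prop :=
  ∀ (u v : S) (p q : (G.induce S).Walk u v),
    IsShortest (G.induce S) p → IsShortest (G.induce S) q →
    walkGain (fun a b : S => φ a b) p = walkGain (fun a b : S => φ a b) q

/-- `B` is a block of `G`: a maximal set of vertices inducing a connected
subgraph without cut vertices. -/
def IsBlock {V : Type*} (G : SimpleGraph V) (B : Set V) : Prop :=
  (G.induce B).Connected ∧ (∀ v : V, (G.induce (B \ {v})).Connected) ∧
    ∀ C : Set V, B ⊆ C → (G.induce C).Connected →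
      (∀ v : V, (G.induce (C \ {v})).Connected) → C = B

namespace Aux
variable {V : Type*} {G : SimpleGraph V} {φ : V → V → ℂ}

theorem walkGain_append {u v w : V} (p : G.Walk u v) (q : G.Walk v w) :
    walkGain φ (p.append q) = walkGain φ p * walkGain φ q := by
  induction p with
  | nil => simp [walkGain]
  | cons h p ih => simp [walkGain, Walk.cons_append, ih, mul_assoc]

/-- gain of a mapped walk from an induced subgraph -/
theorem walkGain_map {S : Set V} {u v : S} (p : (G.induce S).Walk u v) :
    walkGain (fun a b : S => φ a b) p
      = walkGain φ (p.map (SimpleGraph.Embedding.induce S).toHom) := by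
  induction p with
  | nil => rfl
  | cons h p ih => simp only [Walk.map_cons, walkGain, ih]; rfl

/-- lift a `G`-walk with support inside `S` to a walk of `G.induce S`. -/
def liftWalk {S : Set V} : {u v : V} → (p : G.Walk u v) →
    (h : ∀ x ∈ p.support, x ∈ S) →
    (G.induce S).Walk ⟨u, h u p.start_mem_support⟩ ⟨v, h v p.end_mem_support⟩
  | _, _, Walk.nil, _ => Walk.nil
  | _, _, @Walk.cons _ _ u w v a p, h =>
      Walk.cons (show (G.induce S).Adj ⟨u, h u (by simp)⟩ ⟨w, h w (by simp)⟩ from a)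
        (liftWalk p (fun x hx => h x (by simp [hx])))

theorem liftWalk_map {S : Set V} {u v : V} (p : G.Walk u v)
    (h : ∀ x ∈ p.support, x ∈ S) :
    (liftWalk p h).map (SimpleGraph.Embedding.induce S).toHom = p := by
  induction p with
  | nil => simp [liftWalk]
  | cons a p ih => simp only [liftWalk, Walk.map_cons, ih]; rfl


theorem liftWalk_length {S : Set V} {u v : V} (p : G.Walk u v)
    (h : ∀ x ∈ p.support, x ∈ S) : (liftWalk p h).length = p.length := by
  conv_rhs => rw [← liftWalk_map p h]
  exact (Walk.length_map _ _).symm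

theorem liftWalk_gain {S : Set V} {u v : V} (p : G.Walk u v)
    (h : ∀ x ∈ p.support, x ∈ S) :
    walkGain (fun a b : S => φ a b) (liftWalk p h) = walkGain φ p := by
  conv_rhs => rw [← liftWalk_map p h]
  rw [walkGain_map]
  rfl

theorem liftWalk_isPath {S : Set V} {u v : V} {p : G.Walk u v}
    (hp : p.IsPath) (h : ∀ x ∈ p.support, x ∈ S) : (liftWalk p h).IsPath := by
  have := liftWalk_map p h
  rw [← Walk.map_isPath_iff_of_injective (f := (SimpleGraph.Embedding.induce S).toHom)
    Subtype.val_injective, this]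
  exact hp

theorem map_support_mem {S : Set V} {u v : S} (p : (G.induce S).Walk u v)
    {x : V} (hx : x ∈ (p.map (SimpleGraph.Embedding.induce S).toHom).support) : x ∈ S := by
  rw [Walk.support_map] at hx
  obtain ⟨y, _, rfl⟩ := List.mem_map.1 hx
  exact y.2

/-- linked within a set -/
def Lk (G : SimpleGraph V) (S : Set V) (x y : V) : Prop :=
  ∃ p : G.Walk x y, ∀ z ∈ p.support, z ∈ S

theorem Lk.mem_left {S : Set V} {x y : V} (h : Lk G S x y) : x ∈ S := by
  obtain ⟨p, hp⟩ := h; exact hp x p.start_mem_support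

theorem Lk.mem_right {S : Set V} {x y : V} (h : Lk G S x y) : y ∈ S := by
  obtain ⟨p, hp⟩ := h; exact hp y p.end_mem_support

theorem Lk.refl {S : Set V} {x : V} (h : x ∈ S) : Lk G S x x :=
  ⟨Walk.nil, by simpa⟩

theorem Lk.symm {S : Set V} {x y : V} (h : Lk G S x y) : Lk G S y x := by
  obtain ⟨p, hp⟩ := h; exact ⟨p.reverse, fun z hz => hp z (by simpa using hz)⟩

theorem Lk.trans {S : Set V} {x y z : V} (h : Lk G S x y) (h' : Lk G S y z) :
    Lk G S x z := by
  obtain ⟨p, hp⟩ := h; obtain ⟨q, hq⟩ := h'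
  exact ⟨p.append q, fun w hw => by
    rcases (Walk.mem_support_append_iff p q).1 hw with h | h
    · exact hp w h
    · exact hq w h⟩

theorem Lk.mono {S T : Set V} (hST : S ⊆ T) {x y : V} (h : Lk G S x y) :
    Lk G T x y := by
  obtain ⟨p, hp⟩ := h; exact ⟨p, fun z hz => hST (hp z hz)⟩

theorem induce_connected_of {S : Set V} (hne : S.Nonempty)
    (h : ∀ x ∈ S, ∀ y ∈ S, Lk G S x y) : (G.induce S).Connected := by
  have : Nonempty S := ⟨⟨hne.choose, hne.choose_spec⟩⟩
  refine Connected.mk (fun a b => ?_)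
  obtain ⟨p, hp⟩ := h a a.2 b b.2
  exact ⟨(liftWalk p hp).copy (Subtype.ext rfl) (Subtype.ext rfl)⟩

theorem lk_of_induce_connected {S : Set V} (h : (G.induce S).Connected)
    {x y : V} (hx : x ∈ S) (hy : y ∈ S) : Lk G S x y := by
  obtain ⟨p⟩ := h ⟨x, hx⟩ ⟨y, hy⟩
  exact ⟨p.map (SimpleGraph.Embedding.induce S).toHom,
    fun z hz => map_support_mem p hz⟩



theorem dist_induce_ge {S : Set V} (a b : S) (q : (G.induce S).Walk a b) :
    G.dist (a : V) (b : V) ≤ q.length := by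
  have := SimpleGraph.dist_le (q.map (SimpleGraph.Embedding.induce S).toHom)
  rwa [Walk.length_map] at this

theorem shortest_lift {S : Set V} {u v : V} (p : G.Walk u v) (hp : IsShortest G p)
    (hs : ∀ x ∈ p.support, x ∈ S) :
    IsShortest (G.induce S) (liftWalk p hs) ∧
      (G.induce S).dist ⟨u, hs u p.start_mem_support⟩ ⟨v, hs v p.end_mem_support⟩
        = G.dist u v := by
  have hr : (G.induce S).Reachable ⟨u, hs u p.start_mem_support⟩
      ⟨v, hs v p.end_mem_support⟩ := ⟨liftWalk p hs⟩
  obtain ⟨q, hq⟩ := hr.exists_walk_length_eq_dist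
  have h1 : G.dist u v ≤ (G.induce S).dist ⟨u, hs u p.start_mem_support⟩
      ⟨v, hs v p.end_mem_support⟩ := hq ▸ dist_induce_ge _ _ q
  have h2 : (G.induce S).dist ⟨u, hs u p.start_mem_support⟩
      ⟨v, hs v p.end_mem_support⟩ ≤ (liftWalk p hs).length := SimpleGraph.dist_le _
  rw [liftWalk_length, hp.2] at h2
  have hd := le_antisymm h2 h1
  exact ⟨⟨liftWalk_isPath hp.1 hs, by rw [liftWalk_length, hp.2, hd]⟩, hd⟩

theorem shortest_map {S : Set V} {a b : S} (q : (G.induce S).Walk a b)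
    (hq : IsShortest (G.induce S) q)
    (hd : (G.induce S).dist a b = G.dist (a : V) (b : V)) :
    IsShortest G (q.map (SimpleGraph.Embedding.induce S).toHom) :=
  ⟨Walk.map_isPath_of_injective Subtype.val_injective hq.1,
    by rw [Walk.length_map, hq.2]; exact hd⟩

theorem shortest_take_drop [DecidableEq V] (hconn : G.Connected) {u v x : V} {p : G.Walk u v}
    (hp : IsShortest G p) (hx : x ∈ p.support) :
    IsShortest G (p.takeUntil x hx) ∧ IsShortest G (p.dropUntil x hx) := by
  have h1 : G.dist u x ≤ (p.takeUntil x hx).length := SimpleGraph.dist_le _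
  have h2 : G.dist x v ≤ (p.dropUntil x hx).length := SimpleGraph.dist_le _
  have h3 : (p.takeUntil x hx).length + (p.dropUntil x hx).length = p.length := by
    rw [← Walk.length_append, Walk.take_spec]
  have h4 : G.dist u v ≤ G.dist u x + G.dist x v := hconn.dist_triangle
  have hlen := hp.2
  exact ⟨⟨hp.1.takeUntil hx, by omega⟩, ⟨hp.1.dropUntil hx, by omega⟩⟩

theorem eq_of_mem_take_drop [DecidableEq V] {u v x : V} {p : G.Walk u v} (hp : p.IsPath)
    (hx : x ∈ p.support) {z : V} (h1 : z ∈ (p.takeUntil x hx).support)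
    (h2 : z ∈ (p.dropUntil x hx).support) : z = x := by
  have hnd := hp.support_nodup
  conv at hnd => rw [← Walk.take_spec p hx]
  rw [Walk.support_append] at hnd
  rcases (Walk.mem_support_iff _).1 h2 with h | h
  · exact h
  · exact absurd h1 (fun hc => (List.disjoint_of_nodup_append hnd) hc h)

/-- From any vertex of a path one can reach one of the two endpoints while
avoiding a given vertex `w ≠ x`. -/
theorem reach_end_avoiding [DecidableEq V] {u v x w : V} {p : G.Walk u v} (hp : p.IsPath)
    (hx : x ∈ p.support) (hwx : w ≠ x) :
    Lk G ({z | z ∈ p.support} \ {w}) x u ∨ Lk G ({z | z ∈ p.support} \ {w}) x v := by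
  by_cases hw1 : w ∈ (p.takeUntil x hx).support
  · right
    refine ⟨p.dropUntil x hx, fun z hz => ⟨Walk.support_dropUntil_subset p hx hz, ?_⟩⟩
    rintro rfl
    exact hwx (eq_of_mem_take_drop hp hx hw1 hz)
  · left
    refine ⟨(p.takeUntil x hx).reverse, fun z hz => ?_⟩
    rw [Walk.support_reverse, List.mem_reverse] at hz
    exact ⟨Walk.support_takeUntil_subset p hx hz, fun hc => hw1 (hc ▸ hz)⟩

def Good (G : SimpleGraph V) (S : Set V) : Prop :=
  (G.induce S).Connected ∧ ∀ v : V, (G.induce (S \ {v})).Connected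

theorem exists_block {S : Set V} (hS : Good G S) :
    ∃ B : Set V, IsBlock G B ∧ S ⊆ B := by
  have hchainub : ∀ c ⊆ {T | Good G T ∧ S ⊆ T}, IsChain (· ⊆ ·) c → c.Nonempty →
      ∃ ub ∈ {T | Good G T ∧ S ⊆ T}, ∀ s ∈ c, s ⊆ ub := by
    intro c hc hchain hcne
    obtain ⟨T0, hT0⟩ := hcne
    have hmem : ∀ {x : V} (hx : x ∈ ⋃₀ c) {y : V} (hy : y ∈ ⋃₀ c),
        ∃ T ∈ c, x ∈ T ∧ y ∈ T := by
      intro x hx y hy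
      obtain ⟨T1, hT1, hx1⟩ := hx
      obtain ⟨T2, hT2, hy2⟩ := hy
      rcases hchain.total hT1 hT2 with h | h
      · exact ⟨T2, hT2, h hx1, hy2⟩
      · exact ⟨T1, hT1, hx1, h hy2⟩
    have hSne : S.Nonempty := by
      have : Nonempty S := (hS.1).nonempty
      exact ⟨this.some, this.some.2⟩
    have hST0 : S ⊆ T0 := (hc hT0).2
    refine ⟨⋃₀ c, ⟨⟨?_, fun w => ?_⟩, hST0.trans (Set.subset_sUnion_of_mem hT0)⟩,
      fun s hs => Set.subset_sUnion_of_mem hs⟩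
    · refine induce_connected_of ⟨hSne.choose, (hST0.trans
        (Set.subset_sUnion_of_mem hT0)) hSne.choose_spec⟩ (fun x hx y hy => ?_)
      obtain ⟨T, hTc, hxT, hyT⟩ := hmem hx hy
      exact (lk_of_induce_connected (hc hTc).1.1 hxT hyT).mono
        (Set.subset_sUnion_of_mem hTc)
    · have hT0w : ((T0 : Set V) \ {w}).Nonempty := by
        have : Nonempty ((T0 : Set V) \ {w} : Set V) := ((hc hT0).1.2 w).nonempty
        exact ⟨this.some, this.some.2⟩
      refine induce_connected_of ⟨hT0w.choose, ⟨Set.subset_sUnion_of_mem hT0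
        hT0w.choose_spec.1, hT0w.choose_spec.2⟩⟩ (fun x hx y hy => ?_)
      obtain ⟨T, hTc, hxT, hyT⟩ := hmem hx.1 hy.1
      refine (lk_of_induce_connected ((hc hTc).1.2 w) ⟨hxT, hx.2⟩ ⟨hyT, hy.2⟩).mono ?_
      intro z hz
      exact ⟨Set.subset_sUnion_of_mem hTc hz.1, hz.2⟩
  obtain ⟨B, hSB, hmax⟩ := zorn_subset_nonempty {T | Good G T ∧ S ⊆ T}
    hchainub S ⟨hS, subset_rfl⟩
  refine ⟨B, ⟨hmax.prop.1.1, hmax.prop.1.2, fun C hBC hc1 hc2 => ?_⟩, hmax.prop.2⟩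
  exact hmax.eq_of_ge ⟨⟨hc1, hc2⟩, hmax.prop.2.trans hBC⟩ hBC

theorem lk_to_end [DecidableEq V] {u v x : V} {p : G.Walk u v} (hx : x ∈ p.support)
    {S : Set V} (hS : ∀ z ∈ p.support, z ∈ S) : Lk G S x u :=
  ⟨(p.takeUntil x hx).reverse, fun z hz =>
    hS z (Walk.support_takeUntil_subset p hx (by simpa using hz))⟩

theorem good_two_paths [DecidableEq V] {u v : V} (huv : u ≠ v) {p q : G.Walk u v}
    (hp : p.IsPath) (hq : q.IsPath)
    (hcap : ∀ z, z ∈ p.support → z ∈ q.support → z = u ∨ z = v) :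
    Good G {z | z ∈ p.support ∨ z ∈ q.support} := by
  set S : Set V := {z | z ∈ p.support ∨ z ∈ q.support} with hSdef
  have hpS : ∀ z ∈ p.support, z ∈ S := fun z hz => Or.inl hz
  have hqS : ∀ z ∈ q.support, z ∈ S := fun z hz => Or.inr hz
  have huS : u ∈ S := hpS u p.start_mem_support
  have hvS : v ∈ S := hpS v p.end_mem_support
  have key : ∀ x ∈ S, Lk G S x u := by
    intro x hx
    rcases hx with hx | hx
    · exact lk_to_end hx hpS
    · exact lk_to_end hx hqS
  refine ⟨induce_connected_of ⟨u, huS⟩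
    (fun x hx y hy => (key x hx).trans (key y hy).symm), fun w => ?_⟩
  have hA : ∀ x ∈ S \ {w}, Lk G (S \ {w}) x u ∨ Lk G (S \ {w}) x v := by
    intro x hx
    have hwx : w ≠ x := fun h => hx.2 h.symm
    rcases hx.1 with h | h
    · rcases reach_end_avoiding hp h hwx with hl | hl
      · exact Or.inl (hl.mono (Set.diff_subset_diff_left hpS))
      · exact Or.inr (hl.mono (Set.diff_subset_diff_left hpS))
    · rcases reach_end_avoiding hq h hwx with hl | hl
      · exact Or.inl (hl.mono (Set.diff_subset_diff_left hqS))
      · exact Or.inr (hl.mono (Set.diff_subset_diff_left hqS))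
  have hUV : u ≠ w → v ≠ w → Lk G (S \ {w}) u v := by
    intro h1 h2
    by_cases hwp : w ∈ p.support
    · have hwq : w ∉ q.support := by
        intro hc
        rcases hcap w hwp hc with rfl | rfl
        · exact h1 rfl
        · exact h2 rfl
      exact ⟨q, fun z hz => ⟨hqS z hz, fun hc =>
        hwq (by rwa [Set.mem_singleton_iff.1 hc] at hz)⟩⟩
    · exact ⟨p, fun z hz => ⟨hpS z hz, fun hc =>
        hwp (by rwa [Set.mem_singleton_iff.1 hc] at hz)⟩⟩
  rcases eq_or_ne w u with rfl | hwu
  · have hxv : ∀ x ∈ S \ {w}, Lk G (S \ {w}) x v := by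
      intro x hx
      rcases hA x hx with h | h
      · exact absurd rfl h.mem_right.2
      · exact h
    refine induce_connected_of ⟨v, hvS, fun hc => huv (Set.mem_singleton_iff.1 hc).symm⟩
      (fun x hx y hy => (hxv x hx).trans (hxv y hy).symm)
  · rcases eq_or_ne w v with rfl | hwv
    · have hxu : ∀ x ∈ S \ {w}, Lk G (S \ {w}) x u := by
        intro x hx
        rcases hA x hx with h | h
        · exact h
        · exact absurd rfl h.mem_right.2
      refine induce_connected_of ⟨u, huS, fun hc => hwu (Set.mem_singleton_iff.1 hc).symm⟩
        (fun x hx y hy => (hxu x hx).trans (hxu y hy).symm)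
    · have hxu : ∀ x ∈ S \ {w}, Lk G (S \ {w}) x u := by
        intro x hx
        rcases hA x hx with h | h
        · exact h
        · exact h.trans (hUV hwu.symm hwv.symm).symm
      refine induce_connected_of ⟨u, huS, fun hc => hwu (Set.mem_singleton_iff.1 hc).symm⟩
        (fun x hx y hy => (hxu x hx).trans (hxu y hy).symm)

theorem good_block_union_path [DecidableEq V] {B : Set V}
    (hB1 : (G.induce B).Connected) (hB2 : ∀ w : V, (G.induce (B \ {w})).Connected)
    {u v : V} (hu : u ∈ B) (hv : v ∈ B) (huv : u ≠ v) {p : G.Walk u v}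
    (hp : p.IsPath) : Good G (B ∪ {z | z ∈ p.support}) := by
  set S : Set V := B ∪ {z | z ∈ p.support} with hSdef
  have hBS : B ⊆ S := Set.subset_union_left
  have hpS : ∀ z ∈ p.support, z ∈ S := fun z hz => Or.inr hz
  have key : ∀ x ∈ S, Lk G S x u := by
    intro x hx
    rcases hx with hx | hx
    · exact (lk_of_induce_connected hB1 hx hu).mono hBS
    · exact lk_to_end hx hpS
  refine ⟨induce_connected_of ⟨u, hBS hu⟩
    (fun x hx y hy => (key x hx).trans (key y hy).symm), fun w => ?_⟩
  obtain ⟨t, htB, htuv⟩ : ∃ t, t ∈ B \ {w} ∧ (t = u ∨ t = v) := by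
    rcases eq_or_ne w u with rfl | hwu
    · exact ⟨v, ⟨hv, fun hc => huv (Set.mem_singleton_iff.1 hc).symm⟩, Or.inr rfl⟩
    · exact ⟨u, ⟨hu, fun hc => hwu (Set.mem_singleton_iff.1 hc).symm⟩, Or.inl rfl⟩
  have hBsub : B \ {w} ⊆ S \ {w} := fun z hz => ⟨hBS hz.1, hz.2⟩
  have hkey : ∀ x ∈ S \ {w}, Lk G (S \ {w}) x t := by
    intro x hx
    rcases hx.1 with h | h
    · exact (lk_of_induce_connected (hB2 w) ⟨h, hx.2⟩ htB).mono hBsub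
    · have hwx : w ≠ x := fun hc => hx.2 hc.symm
      have step : ∃ e, (e = u ∨ e = v) ∧ Lk G (S \ {w}) x e := by
        rcases reach_end_avoiding hp h hwx with hl | hl
        · exact ⟨u, Or.inl rfl, hl.mono (Set.diff_subset_diff_left hpS)⟩
        · exact ⟨v, Or.inr rfl, hl.mono (Set.diff_subset_diff_left hpS)⟩
      obtain ⟨e, heuv, hle⟩ := step
      have heB : e ∈ B \ {w} := by
        refine ⟨?_, hle.mem_right.2⟩
        rcases heuv with rfl | rfl
        · exact hu
        · exact hv
      exact hle.trans ((lk_of_induce_connected (hB2 w) heB htB).mono hBsub)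
  exact induce_connected_of ⟨t, hBsub htB⟩
    (fun x hx y hy => (hkey x hx).trans (hkey y hy).symm)

end Aux

/-- A connected conjugate skew gain graph is distance compatible if and only if
every block of it is distance compatible. -/
theorem distance_compatible_iff_blocks {V : Type*} (G : SimpleGraph V)
    (φ : V → V → ℂ) (hconn : G.Connected)
    (hne : ∀ u v, G.Adj u v → φ u v ≠ 0)
    (hsym : ∀ u v, G.Adj u v → φ v u = (starRingEnd ℂ) (φ u v)) :
    (∀ u v : V, DistCompatPair G φ u v) ↔
      ∀ B : Set V, IsBlock G B → DistCompatOn G φ B := by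
  classical
  constructor
  · intro hG B hB u v p q hp hq
    rcases Nat.eq_zero_or_pos p.length with h0 | hpos
    · cases p with
      | nil =>
        cases q with
        | nil => rfl
        | cons h r =>
          have h2 := hq.2
          rw [SimpleGraph.dist_self] at h2
          simp at h2
      | cons h r => simp at h0
    · have huv : (u : V) ≠ (v : V) := by
        intro h
        have huv' : u = v := Subtype.ext h
        subst huv'
        rw [hp.2, SimpleGraph.dist_self] at hpos
        omega
      obtain ⟨r0, hr0⟩ := hconn.exists_walk_length_eq_dist (u : V) (v : V)
      have hrpath := r0.bypass_isPath
      have hrshort : IsShortest G r0.bypass := by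
        refine ⟨hrpath, le_antisymm ?_ (SimpleGraph.dist_le _)⟩
        calc r0.bypass.length ≤ r0.length := Walk.length_bypass_le _
          _ = _ := hr0
      have hgood : Aux.Good G (B ∪ {z | z ∈ r0.bypass.support}) :=
        Aux.good_block_union_path hB.1 hB.2.1 u.2 v.2 huv hrpath
      have hCB : B ∪ {z | z ∈ r0.bypass.support} = B :=
        hB.2.2 _ Set.subset_union_left hgood.1 hgood.2
      have hsupp : ∀ x ∈ r0.bypass.support, x ∈ B := fun x hx => by
        have hx2 : x ∈ B ∪ {z | z ∈ r0.bypass.support} := Or.inr hx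
        rwa [hCB] at hx2
      have hd : (G.induce B).dist u v = G.dist (u : V) (v : V) :=
        (Aux.shortest_lift r0.bypass hrshort hsupp).2
      have hp' := Aux.shortest_map p hp hd
      have hq' := Aux.shortest_map q hq hd
      have hgain := hG (u : V) (v : V) _ _ hp' hq'
      rw [Aux.walkGain_map (φ := φ) p, Aux.walkGain_map (φ := φ) q]
      exact hgain
  · intro hB u v
    suffices H : ∀ n : ℕ, ∀ u v : V, G.dist u v = n → DistCompatPair G φ u v from
      H (G.dist u v) u v rfl
    intro n
    induction n using Nat.strong_induction_on with
    | _ n IH =>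
      intro u v hn p q hp hq
      rcases Nat.eq_zero_or_pos n with rfl | hpos
      · have hl : p.length = 0 := by rw [hp.2, hn]
        cases p with
        | nil =>
          have hlq : q.length = 0 := by rw [hq.2, hn]
          cases q with
          | nil => rfl
          | cons h r => simp at hlq
        | cons h r => simp at hl
      · by_cases hex : ∃ w, w ∈ p.support ∧ w ∈ q.support ∧ w ≠ u ∧ w ≠ v
        · obtain ⟨w, hwp, hwq, hwu, hwv⟩ := hex
          obtain ⟨hps1, hps2⟩ := Aux.shortest_take_drop hconn hp hwp
          obtain ⟨hqs1, hqs2⟩ := Aux.shortest_take_drop hconn hq hwq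
          have l3 : (p.takeUntil w hwp).length + (p.dropUntil w hwp).length
              = p.length := by
            rw [← Walk.length_append, Walk.take_spec]
          have hne1 : G.dist u w ≠ 0 := by
            intro h
            have hz : (p.takeUntil w hwp).length = 0 := by rw [hps1.2, h]
            exact hwu (Walk.eq_of_length_eq_zero hz).symm
          have hne2 : G.dist w v ≠ 0 := by
            intro h
            have hz : (p.dropUntil w hwp).length = 0 := by rw [hps2.2, h]
            exact hwv (Walk.eq_of_length_eq_zero hz)
          have hsum : G.dist u w + G.dist w v = n := by
            rw [← hps1.2, ← hps2.2, l3, hp.2, hn]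
          have e1 := IH (G.dist u w) (by omega) u w rfl _ _ hps1 hqs1
          have e2 := IH (G.dist w v) (by omega) w v rfl _ _ hps2 hqs2
          conv_lhs => rw [← Walk.take_spec p hwp]
          conv_rhs => rw [← Walk.take_spec q hwq]
          rw [Aux.walkGain_append, Aux.walkGain_append, e1, e2]
        · push_neg at hex
          have hcap : ∀ z, z ∈ p.support → z ∈ q.support → z = u ∨ z = v := by
            intro z h1 h2
            by_cases hzu : z = u
            · exact Or.inl hzu
            · exact Or.inr (hex z h1 h2 hzu)
          have huv : u ≠ v := by
            intro h
            subst h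
            rw [SimpleGraph.dist_self] at hn
            omega
          have hgood := Aux.good_two_paths huv hp.1 hq.1 hcap
          obtain ⟨B, hBblock, hSB⟩ := Aux.exists_block hgood
          have hsp : ∀ x ∈ p.support, x ∈ B := fun x hx => hSB (Or.inl hx)
          have hsq : ∀ x ∈ q.support, x ∈ B := fun x hx => hSB (Or.inr hx)
          obtain ⟨hpB, -⟩ := Aux.shortest_lift p hp hsp
          obtain ⟨hqB, -⟩ := Aux.shortest_lift q hq hsq
          have hgain := hB B hBblock ⟨u, hsp u p.start_mem_support⟩
            ⟨v, hsp v p.end_mem_support⟩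
            (Aux.liftWalk p hsp) (Aux.liftWalk q hsq) hpB hqB
          rwa [Aux.liftWalk_gain, Aux.liftWalk_gain] at hgain
end

section
/- For a switching function ζ: V → 𝕋 on a connected distance compatible conjugate skew gain graph G^φ with distance matrix D(G^φ), the switched graph G^{φ^ζ} is also distance compatible and D(G^{φ^ζ}) = S·D(G^φ)·S*, where S = diag(ζ(v₁),…,ζ(vₙ)) and S* is the conjugate transpose of S; in particular D(G^φ) and D(G^{φ^ζ}) are similar and have the same spectrum. -/
open Complex SimpleGraph Finset

lemma walkGain_switch {V : Type*} {G : SimpleGraph V} (φ : V → V → ℂ) (ζ : V → ℂ)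
    (h1 : ∀ w, ζ w * (starRingEnd ℂ) (ζ w) = 1) {u v : V} (p : G.Walk u v) :
    walkGain (fun a b => (starRingEnd ℂ) (ζ a) * φ a b * ζ b) p =
      (starRingEnd ℂ) (ζ u) * walkGain φ p * ζ v := by
  induction p with
  | nil =>
    simp only [walkGain, mul_one]
    rw [mul_comm]; exact (h1 _).symm
  | cons h p ih =>
    rename_i a b c
    simp only [walkGain, ih]
    linear_combination ((starRingEnd ℂ) (ζ a) * φ a b * walkGain φ p * ζ c) * h1 b

lemma charpoly_conj_aux {n : Type*} [Fintype n] [DecidableEq n] {R : Type*} [CommRing R]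
    (P Q M : Matrix n n R) (hQP : Q * P = 1) :
    (Q * M * P).charpoly = M.charpoly := by
  unfold Matrix.charpoly
  have hmap : ((Polynomial.C : R →+* Polynomial R).mapMatrix Q) *
      ((Polynomial.C : R →+* Polynomial R).mapMatrix P) = 1 := by
    rw [← map_mul, hQP, map_one]
  have key : Matrix.charmatrix (Q * M * P) =
      (Polynomial.C : R →+* Polynomial R).mapMatrix Q * Matrix.charmatrix M *
        (Polynomial.C : R →+* Polynomial R).mapMatrix P := by
    unfold Matrix.charmatrix
    rw [Matrix.mul_sub, Matrix.sub_mul, ← map_mul, ← map_mul]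
    congr 1
    have hc : Commute (Matrix.scalar n (Polynomial.X : Polynomial R))
        ((Polynomial.C : R →+* Polynomial R).mapMatrix Q) :=
      Matrix.scalar_commute _ (fun r' => Commute.all _ _) _
    rw [← hc.eq, mul_assoc, hmap, mul_one]
  rw [key, Matrix.det_mul, Matrix.det_mul]
  have : ((Polynomial.C : R →+* Polynomial R).mapMatrix Q).det *
      ((Polynomial.C : R →+* Polynomial R).mapMatrix P).det = 1 := by
    rw [← Matrix.det_mul, hmap, Matrix.det_one]
  calc _ = (Matrix.charmatrix M).det *
      (((Polynomial.C : R →+* Polynomial R).mapMatrix Q).det *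
        ((Polynomial.C : R →+* Polynomial R).mapMatrix P).det) := by ring
  _ = _ := by rw [this, mul_one]

/-- Switching a connected distance compatible conjugate skew gain graph yields a
distance compatible graph, and the distance matrices are related by conjugation
with the unitary diagonal matrix `S = diag ζ`; in particular they have the same
characteristic polynomial, hence the same spectrum. -/
theorem switching_distance_matrix {V : Type*} [Fintype V] [DecidableEq V]
    (G : SimpleGraph V) (φ : V → V → ℂ) (hconn : G.Connected)
    (hne : ∀ u v, G.Adj u v → φ u v ≠ 0)
    (hsym : ∀ u v, G.Adj u v → φ v u = (starRingEnd ℂ) (φ u v))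
    (ζ : V → ℂ) (hζ : ∀ v, ‖ζ v‖ = 1)
    (g : V → V → ℂ)
    (hg : ∀ (u v : V) (p : G.Walk u v), IsShortest G p → walkGain φ p = g u v)
    (gζ : V → V → ℂ)
    (hgζ : ∀ (u v : V) (p : G.Walk u v), IsShortest G p →
      walkGain (fun a b => (starRingEnd ℂ) (ζ a) * φ a b * ζ b) p = gζ u v) :
    (∀ u v : V, DistCompatPair G (fun a b => (starRingEnd ℂ) (ζ a) * φ a b * ζ b) u v) ∧
      Dmat G gζ = (Matrix.diagonal ζ).conjTranspose * Dmat G g * Matrix.diagonal ζ ∧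
      (Dmat G gζ).charpoly = (Dmat G g).charpoly := by
  have h1 : ∀ w, ζ w * (starRingEnd ℂ) (ζ w) = 1 := by
    intro w
    rw [Complex.mul_conj, Complex.normSq_eq_norm_sq, hζ]
    norm_num
  -- relation between gζ and g
  have hrel : ∀ u v : V, u ≠ v →
      gζ u v = (starRingEnd ℂ) (ζ u) * g u v * ζ v := by
    intro u v _
    obtain ⟨p, hp, hl⟩ := hconn.exists_path_of_dist u v
    have hs : IsShortest G p := ⟨hp, hl⟩
    rw [← hgζ u v p hs, ← hg u v p hs, walkGain_switch φ ζ h1]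
  have hD : Dmat G gζ = (Matrix.diagonal ζ).conjTranspose * Dmat G g * Matrix.diagonal ζ := by
    ext u v
    rw [Matrix.diagonal_conjTranspose, Matrix.mul_diagonal, Matrix.diagonal_mul]
    simp only [Dmat, Pi.star_apply, Complex.star_def]
    by_cases h : u = v
    · simp [h]
    · simp only [h, if_false]
      rw [hrel u v h]
      ring
  have hQP : (Matrix.diagonal ζ).conjTranspose * Matrix.diagonal ζ = 1 := by
      rw [Matrix.diagonal_conjTranspose, Matrix.diagonal_mul_diagonal]
      have hf : (fun i => star ζ i * ζ i) = fun _ : V => (1 : ℂ) := by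
        funext w
        simp only [Pi.star_apply, Complex.star_def]
        rw [mul_comm]; exact h1 w
      rw [hf, Matrix.diagonal_one]
  refine ⟨?_, hD, ?_⟩
  · intro u v p q hp hq
    rw [walkGain_switch φ ζ h1, walkGain_switch φ ζ h1, hg u v p hp, hg u v q hq]
  · rw [hD]
    exact charpoly_conj_aux (Matrix.diagonal ζ) (Matrix.diagonal ζ).conjTranspose
      (Dmat G g) hQP
end
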